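/- Let A be a finite-dimensional central simple algebra over a field F and E a commutative subfield of A containing F with dim_F(A) = (dim_F E)². Then E is a maximal subfield of A, i.e. the centralizer of E in A equals E. -/

import Mathlib

/-!
Let `w₁, …, wₙ` be an `F`-basis of `E`. Since `A` is central simple, a family `a` with
`∑ wᵢ x aᵢ = 0` for all `x` must vanish: a shortest nonzero relation can be normalized to
`aᵢ₀ = 1`, and then its entries are central, hence scalars, contradicting independence. So
`a ↦ (x ↦ ∑ wᵢ x aᵢ)` embeds `Aⁿ` into `End_E(A)`; as `dim_E A = n`, both have `F`-dimension
`n³`, and the map is onto. Left multiplication by `c` in the centralizer of `E` is `E`-linear,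
hence of this form; the same centrality argument puts each `aᵢ` in `F`, so `c = ∑ aᵢ wᵢ ∈ E`.
-/

open Module Finset Subalgebra

section Sandwich

variable {A ι : Type*} [Ring A]

/-- The action of `∑ i ∈ s, w i ⊗ a i ∈ A ⊗ Aᵐᵒᵖ` on `A`. -/
def sandwichSum (w : ι → A) (s : Finset ι) : (ι → A) →+ A → A where
  toFun a x := ∑ i ∈ s, w i * x * a i
  map_zero' := by ext; simp
  map_add' a b := by ext; simp [mul_add, sum_add_distrib]

variable (w : ι → A) (s : Finset ι) (a : ι → A)

theorem sandwichSum_apply (x : A) : sandwichSum w s a x = ∑ i ∈ s, w i * x * a i := rfl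

theorem sandwichSum_mul_left (r x : A) :
    sandwichSum w s (fun i ↦ r * a i) x = sandwichSum w s a (x * r) := by
  simp [sandwichSum_apply, mul_assoc]

theorem sandwichSum_mul_right (r x : A) :
    sandwichSum w s (fun i ↦ a i * r) x = sandwichSum w s a x * r := by
  simp [sandwichSum_apply, sum_mul, mul_assoc]

theorem sandwichSum_commutator (r x : A) :
    sandwichSum w s (fun i ↦ r * a i - a i * r) x =
      sandwichSum w s a (x * r) - sandwichSum w s a x * r := by
  rw [← sandwichSum_mul_left, ← sandwichSum_mul_right, ← Pi.sub_apply, ← map_sub]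
  rfl

theorem sandwichSum_erase [DecidableEq ι] {i : ι} (hi : a i = 0) :
    sandwichSum w (s.erase i) a = sandwichSum w s a := by
  ext x
  exact sum_erase s (by simp [hi])

variable {w s a}

/-- The `i₀`-entries of the families `c` with `sandwichSum w s c = 0` form a two-sided ideal. -/
theorem exists_sandwichSum_eq_zero_apply_eq_one [IsSimpleRing A] (h : sandwichSum w s a = 0)
    {i₀ : ι} (ha : a i₀ ≠ 0) : ∃ c, sandwichSum w s c = 0 ∧ c i₀ = 1 := by
  let I : TwoSidedIdeal A := .mk' {y | ∃ c, sandwichSum w s c = 0 ∧ c i₀ = y}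
    ⟨0, map_zero _, rfl⟩
    (fun ⟨c, hc, hcy⟩ ⟨d, hd, hdy⟩ ↦ ⟨c + d, by simp [hc, hd], by simp [hcy, hdy]⟩)
    (fun ⟨c, hc, hcy⟩ ↦ ⟨-c, by simp [hc], by simp [hcy]⟩)
    (fun {r _} ⟨c, hc, hcy⟩ ↦ ⟨fun i ↦ r * c i,
      by ext x; simp [sandwichSum_mul_left, hc], by simp [hcy]⟩)
    (fun {_ r} ⟨c, hc, hcy⟩ ↦ ⟨fun i ↦ c i * r,
      by ext x; simp [sandwichSum_mul_right, hc], by simp [hcy]⟩)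
  have : (1 : A) ∈ I := IsSimpleRing.one_mem_of_ne_zero_mem I ha
    ((TwoSidedIdeal.mem_mk' _ _ _ _ _ _ _).2 ⟨a, h, rfl⟩)
  obtain ⟨c, hc, hc₁⟩ := (TwoSidedIdeal.mem_mk' _ _ _ _ _ _ _).1 this
  exact ⟨c, hc, hc₁⟩

end Sandwich

section Subalgebra

variable {R A : Type*} [CommRing R] [Ring A] [Algebra R A]

theorem sandwichSum_one_of_eq_algebraMap {ι : Type*} {w : ι → A} {s : Finset ι} {a : ι → A}
    {l : ι → R} (hl : ∀ i ∈ s, a i = algebraMap R A (l i)) :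
    sandwichSum w s a 1 = ∑ i ∈ s, l i • w i :=
  sum_congr rfl fun i hi ↦ by rw [mul_one, hl i hi, ← Algebra.commutes, Algebra.smul_def]

theorem Subalgebra.isField_of_forall_mul_comm [Nontrivial A] (E : Subalgebra R A)
    (hcomm : ∀ x ∈ E, ∀ y ∈ E, x * y = y * x)
    (hinv : ∀ x ∈ E, x ≠ 0 → ∃ y ∈ E, x * y = 1) : IsField E where
  exists_pair_ne := ⟨0, 1, zero_ne_one⟩
  mul_comm x y := Subtype.ext (hcomm x x.2 y y.2)
  mul_inv_cancel {x} hx := by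
    obtain ⟨y, hy, hxy⟩ := hinv x x.2 fun h ↦ hx (Subtype.ext h)
    exact ⟨⟨y, hy⟩, Subtype.ext hxy⟩

variable {E : Subalgebra R A}

def Subalgebra.mulLeftOfMemCentralizer {c : A} (hc : c ∈ centralizer R (E : Set A)) :
    A →ₗ[E] A where
  toFun := (c * ·)
  map_add' := mul_add c
  map_smul' e x := by
    simp only [RingHom.id_apply, Subalgebra.smul_def, smul_eq_mul, ← mul_assoc,
      (mem_centralizer_iff R).1 hc e e.2]

def sandwichLinearMap {ι : Type*} [Fintype ι] {w : ι → A}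
    (hwE : ∀ i, w i ∈ centralizer R (E : Set A)) : (ι → A) →ₗ[R] A →ₗ[E] A where
  toFun a :=
    { toFun := sandwichSum w univ a
      map_add' x y := by simp [sandwichSum_apply, mul_add, add_mul, sum_add_distrib]
      map_smul' e x := by
        simp only [sandwichSum_apply, RingHom.id_apply, Subalgebra.smul_def, smul_eq_mul, mul_sum,
          ← mul_assoc, (mem_centralizer_iff R).1 (hwE _) e e.2] }
  map_add' a b := LinearMap.ext fun x ↦ congr_fun (map_add (sandwichSum w univ) a b) x
  map_smul' r a := LinearMap.ext fun x ↦ by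
    change sandwichSum w univ (r • a) x = r • sandwichSum w univ a x
    simp [sandwichSum_apply, smul_sum]

end Subalgebra

section CentralSimple

variable {F A ι : Type*} [Field F] [Ring A] [Algebra F A] [Algebra.IsCentral F A] [IsSimpleRing A]
  {w : ι → A}

theorem LinearIndependent.eq_zero_of_sandwichSum_eq_zero (hw : LinearIndependent F w)
    {s : Finset ι} {a : ι → A} (h : sandwichSum w s a = 0) : ∀ i ∈ s, a i = 0 := by
  classical
  induction s using Finset.strongInduction generalizing a with
  | H s ih =>
  intro i₀ hi₀
  by_contra ha
  obtain ⟨c, hc, hc₁⟩ := exists_sandwichSum_eq_zero_apply_eq_one h ha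
  -- the commutators `r * c i - c i * r` form a relation that vanishes at `i₀`
  have hcentral : ∀ i ∈ s, c i ∈ center F A := by
    intro i hi
    refine mem_center_iff.2 fun r ↦ ?_
    obtain rfl | hne := eq_or_ne i i₀
    · simp [hc₁]
    refine sub_eq_zero.1 <| ih _ (erase_ssubset hi₀) (a := fun i ↦ r * c i - c i * r) ?_ i
      (mem_erase.2 ⟨hne, hi⟩)
    ext x
    rw [sandwichSum_erase _ _ _ (by simp [hc₁]), sandwichSum_commutator, hc]
    simp
  choose! l hl using fun i hi ↦ (Algebra.IsCentral.mem_center_iff F).1 (hcentral i hi)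
  have hl₀ : l i₀ = 0 := linearIndependent_iff'.1 hw s l
    (by rw [← sandwichSum_one_of_eq_algebraMap hl, hc]; rfl) i₀ hi₀
  exact zero_ne_one (by rw [← hc₁, hl i₀ hi₀, hl₀, map_zero] : (0 : A) = 1)

theorem LinearIndependent.mem_span_of_sandwichSum_eq_mul (hw : LinearIndependent F w)
    {s : Finset ι} {a : ι → A} {c : A} (h : sandwichSum w s a = (c * ·)) :
    c ∈ Submodule.span F (w '' s) := by
  have hcentral : ∀ i ∈ s, a i ∈ center F A := fun i hi ↦
    mem_center_iff.2 fun r ↦ sub_eq_zero.1 <|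
      hw.eq_zero_of_sandwichSum_eq_zero (a := fun i ↦ r * a i - a i * r)
        (by ext x; simp [sandwichSum_commutator, h, mul_assoc]) i hi
  choose! l hl using fun i hi ↦ (Algebra.IsCentral.mem_center_iff F).1 (hcentral i hi)
  have hc : c = ∑ i ∈ s, l i • w i := by
    rw [← sandwichSum_one_of_eq_algebraMap hl, h]
    exact (mul_one c).symm
  rw [hc]
  exact Submodule.sum_mem _ fun i hi ↦
    Submodule.smul_mem _ _ (Submodule.subset_span (Set.mem_image_of_mem w hi))

theorem sandwichLinearMap_surjective [FiniteDimensional F A] {E : Subalgebra F A} [Fintype ι]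
    (hwE : ∀ i, w i ∈ centralizer F (E : Set A)) (hw : LinearIndependent F w)
    {κ : Type*} [Fintype κ] (b : Basis κ E A) (hcard : Fintype.card κ = Fintype.card ι) :
    Function.Surjective (sandwichLinearMap hwE) := by
  have : FiniteDimensional F (A →ₗ[E] A) := (b.constr F).finiteDimensional
  refine (LinearMap.injective_iff_surjective_of_finrank_eq_finrank ?_).1 ?_
  · rw [← (b.constr F).finrank_eq]
    simp [finrank_pi_fintype, hcard]
  · refine (injective_iff_map_eq_zero _).2 fun a ha ↦ funext fun i ↦
      hw.eq_zero_of_sandwichSum_eq_zero (funext fun x ↦ LinearMap.congr_fun ha x) i (mem_univ i)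

end CentralSimple

/-- a commutative subfield `E` (containing `F`) of a finite-dimensional
central simple `F`-algebra `A` with `dim_F A = (dim_F E)²` is a maximal subfield:
its centralizer in `A` is `E` itself. -/
theorem subfield_of_square_dim_is_maximal
    {F A : Type*} [Field F] [Ring A] [Algebra F A]
    [FiniteDimensional F A] [Algebra.IsCentral F A] [IsSimpleRing A]
    (E : Subalgebra F A)
    (hcomm : ∀ x ∈ E, ∀ y ∈ E, x * y = y * x)
    (hinv : ∀ x ∈ E, x ≠ 0 → ∃ y ∈ E, x * y = 1)
    (hdim : Module.finrank F A = Module.finrank F E ^ 2) :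
    Subalgebra.centralizer F (E : Set A) = E := by
  let : Field E := (E.isField_of_forall_mul_comm hcomm hinv).toField
  have : Module.Finite E A := .of_restrictScalars_finite F E A
  have hEA : finrank E A = finrank F E := by
    have := finrank_mul_finrank F E A
    rw [hdim, sq] at this
    exact Nat.eq_of_mul_eq_mul_left finrank_pos this
  refine le_antisymm (fun c hc ↦ ?_) fun x hx ↦ (mem_centralizer_iff F).2 fun y hy ↦ hcomm y hy x hx
  let b := finBasis F E
  have hbE : ∀ i, (b i : A) ∈ centralizer F (E : Set A) := fun i ↦
    (mem_centralizer_iff F).2 fun y hy ↦ hcomm y hy _ (b i).2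
  have hb : LinearIndependent F fun i ↦ (b i : A) :=
    b.linearIndependent.map' E.val.toLinearMap (LinearMap.ker_eq_bot.2 Subtype.val_injective)
  obtain ⟨a, ha⟩ := sandwichLinearMap_surjective hbE hb (finBasis E A) (by simp [hEA])
    (mulLeftOfMemCentralizer hc)
  have hc_span := hb.mem_span_of_sandwichSum_eq_mul (s := univ) (a := a) (c := c)
    (funext (LinearMap.congr_fun ha))
  exact Submodule.span_le (p := toSubmodule E).2 (by rintro _ ⟨i, -, rfl⟩; exact (b i).2) hc_span
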